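/- Let L, L₁, …, L_K : ℝⁿ → ℝ with each L_k three times continuously differentiable and L continuously differentiable. Fix weights w₁, …, w_K with Σ_k w_k = 1, indices i ≠ j with w_i > 0 and w_j > 0, and a point x ∈ ℝⁿ. Suppose P(L_i − L_j, Σ_k w_k L_k; L)(x) ≠ 0. Then there exist δ > 0 with δ ≤ min(w_i, w_j) and ε₀ > 0 such that for all ε ∈ (0, ε₀), at least one of the two reordered trajectories strictly improves L: writing u₁ = −Σ_k w_k ∇L_k − δ(∇L_i − ∇L_j), u₂ = −Σ_k w_k ∇L_k + δ(∇L_i − ∇L_j), v = −Σ_k w_k ∇L_k, with flows Φ₁, Φ₂, Φ̄ of u₁, u₂, v, we have min( L(Φ₂(ε, Φ₁(ε, x))), L(Φ₁(ε, Φ₂(ε, x))) ) < L(Φ̄(2ε, x)). -/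

import Mathlib

/-!
All three trajectories agree with `x + ε (u₁ + u₂)(x)` to first order. At second order, the
composition `Φ_g(ε, Φ_f(ε, x))` of two flows picks up `½ Df f + Dg f + ½ Dg g`, so for
`f, g = v ∓ δ a` the two reorderings differ from `Φ_v(2ε, x)` by `± δ ε² [v, a](x) + o(ε²)`.
Since `L` is strictly differentiable at `x`, `L` changes by `± δ ε² DL(x) [v, a](x) + o(ε²)`,
and the order for which this is negative improves on the constant schedule.
The second-order expansion of a flow, uniform in the starting point, follows from two
applications of the mean value inequality along the integral curve.
-/

open Asymptotics Topology
open scoped RealInnerProductSpace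

open Set Filter VectorField
open scoped Gradient

section Flow

variable {E : Type*} [NormedAddCommGroup E] [NormedSpace ℝ E]

def HasSecondOrderExpansion (p : ℝ → E) (x b c : E) : Prop :=
  (fun ε => p ε - (x + ε • b + ε ^ 2 • c)) =o[𝓝[≥] 0] fun ε => ε ^ 2

lemma isBigO_smul_const {α : Type*} {l : Filter α} (f : α → ℝ) (c : E) :
    (fun ε => f ε • c) =O[l] f :=
  isBigO_of_le' (c := ‖c‖) l fun ε => by rw [norm_smul, mul_comm]

lemma isLittleO_pow_smul {l : Filter ℝ} {f : ℝ → E} {k n : ℕ} (m : ℕ) (hn : m + k = n)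
    (h : f =o[l] fun ε => ε ^ k) : (fun ε => ε ^ m • f ε) =o[l] fun ε => ε ^ n := by
  simpa only [smul_eq_mul, ← pow_add, hn] using
    (isBigO_refl (fun ε : ℝ => ε ^ m) l).smul_isLittleO h

lemma eventually_neg_of_isLittleO {f : ℝ → ℝ} {S : ℝ} (hS : S < 0)
    (h : (fun ε => f ε - ε ^ 2 * S) =o[𝓝[>] 0] fun ε => ε ^ 2) : ∀ᶠ ε in 𝓝[>] 0, f ε < 0 := by
  filter_upwards [h.def (by linarith : 0 < -S / 2), self_mem_nhdsWithin] with ε hε hε0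
  rw [Real.norm_of_nonneg (sq_nonneg ε)] at hε
  nlinarith [(Real.le_norm_self _).trans hε, pow_pos (mem_Ioi.1 hε0) 2]

namespace HasSecondOrderExpansion

variable {p q : ℝ → E} {x b c : E}

lemma apply_zero (h : HasSecondOrderExpansion p x b c) : p 0 = x := by
  simpa [sub_eq_zero] using (h.def one_pos).self_of_nhdsWithin self_mem_Ici

lemma hasDerivWithinAt (h : HasSecondOrderExpansion p x b c) :
    HasDerivWithinAt p b (Ici 0) 0 := by
  have hsq : (fun ε : ℝ => ε ^ 2) =o[𝓝[≥] 0] fun ε => ε :=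
    (isLittleO_pow_id one_lt_two).mono nhdsWithin_le_nhds
  rw [hasDerivWithinAt_iff_isLittleO, h.apply_zero]
  simpa only [sub_zero] using
    ((h.trans hsq).add ((isBigO_smul_const _ c).trans_isLittleO hsq)).congr_left fun ε => by module

lemma tendsto (h : HasSecondOrderExpansion p x b c) : Tendsto p (𝓝[≥] 0) (𝓝 x) :=
  h.apply_zero ▸ h.hasDerivWithinAt.continuousWithinAt

lemma comp_mul (h : HasSecondOrderExpansion p x b c) {a : ℝ} (ha : 0 ≤ a) :
    HasSecondOrderExpansion (fun ε => p (a * ε)) x (a • b) (a ^ 2 • c) := by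
  have hmul : Tendsto (fun ε : ℝ => a * ε) (𝓝[≥] 0) (𝓝[≥] 0) := by
    refine tendsto_nhdsWithin_of_tendsto_nhds_of_eventually_within _ ?_ ?_
    · simpa using ((continuous_const_mul a).tendsto 0).mono_left nhdsWithin_le_nhds
    · filter_upwards [self_mem_nhdsWithin] with ε hε using mul_nonneg ha hε
  refine ((h.comp_tendsto hmul).trans_isBigO (isBigO_of_le' (c := a ^ 2) _ fun ε => ?_)).congr_left
    fun ε => ?_
  · simp [mul_pow]
  · simp only [Function.comp_apply]
    module

lemma eventually_lt {L : E → ℝ} {φ : E →L[ℝ] ℝ} (hL : HasStrictFDerivAt L φ x) {cp cq : E}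
    (hp : HasSecondOrderExpansion p x b cp) (hq : HasSecondOrderExpansion q x b cq)
    (h : φ (cp - cq) < 0) : ∀ᶠ ε in 𝓝[>] 0, L (p ε) < L (q ε) := by
  have hpq : (fun ε => p ε - q ε - ε ^ 2 • (cp - cq)) =o[𝓝[≥] 0] fun ε => ε ^ 2 :=
    (hp.sub hq).congr_left fun ε => by module
  have hpq' : (fun ε => p ε - q ε) =O[𝓝[≥] 0] fun ε => ε ^ 2 :=
    (hpq.isBigO.add (isBigO_smul_const _ _)).congr_left fun ε => sub_add_cancel _ _
  have hL' : (fun ε => L (p ε) - L (q ε) - φ (p ε - q ε)) =o[𝓝[≥] 0] fun ε => ε ^ 2 :=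
    (hL.isLittleO.comp_tendsto (hp.tendsto.prodMk_nhds hq.tendsto)).trans_isBigO hpq'
  have hdiff := (hL'.add ((φ.isBigO_comp _ _).trans_isLittleO hpq)).mono
    (nhdsWithin_mono _ Ioi_subset_Ici_self)
  refine (eventually_neg_of_isLittleO h (hdiff.congr_left fun ε => ?_)).mono fun ε => sub_neg.1
  simp only [map_sub, map_smul, smul_eq_mul]
  ring

end HasSecondOrderExpansion

def IsLocalFlow (u : E → E) (Φ : ℝ → E → E) : Prop :=
  (∀ y, Φ 0 y = y) ∧ ∃ r > 0, ∀ y, ∀ t : ℝ, |t| < r → HasDerivAt (fun s => Φ s y) (u (Φ t y)) t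

lemma mem_ball_of_hasDerivAt_of_norm_lt {γ : ℝ → E} {u : E → E} {y : E} {t M ρ : ℝ}
    (hγ : ∀ s ∈ Icc 0 t, HasDerivAt γ (u (γ s)) s) (hγ0 : γ 0 = y)
    (hu : ∀ z ∈ Metric.ball y ρ, ‖u z‖ < M) (hM : 0 ≤ M) (ht : M * t < ρ) {s : ℝ}
    (hs : s ∈ Icc 0 t) : γ s ∈ Metric.ball y ρ := by
  subst hγ0
  have hnorm : ‖γ s - γ 0‖ ≤ M * s := by
    refine image_norm_le_of_norm_deriv_right_lt_deriv_boundary (f := fun s => γ s - γ 0)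
      (B := fun s => M * s) (B' := fun _ => M)
      (fun s hs => ((hγ s hs).continuousAt.sub continuousAt_const).continuousWithinAt)
      (fun s hs => ((hγ s (Ico_subset_Icc_self hs)).sub_const (γ 0)).hasDerivWithinAt)
      (by simp) (fun s => by simpa using (hasDerivAt_id s).const_mul M) (fun s hs heq => hu _ ?_) hs
    rw [Metric.mem_ball, dist_eq_norm, heq]
    nlinarith [hs.2, hs.1]
  rw [Metric.mem_ball, dist_eq_norm]
  nlinarith [hs.2]

lemma norm_sub_taylor_le {u : E → E} (hu : Differentiable ℝ u) {γ : ℝ → E} {y : E} {t η : ℝ}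
    (ht : 0 ≤ t) (hγ : ∀ s ∈ Icc 0 t, HasDerivAt γ (u (γ s)) s) (hγ0 : γ 0 = y)
    (hη : ∀ s ∈ Icc 0 t, ‖fderiv ℝ u (γ s) (u (γ s)) - fderiv ℝ u y (u y)‖ ≤ η) :
    ‖γ t - (y + t • u y + (t ^ 2 / 2) • fderiv ℝ u y (u y))‖ ≤ η * t ^ 2 := by
  subst hγ0
  set h := fderiv ℝ u (γ 0) (u (γ 0))
  have hη0 : 0 ≤ η := (norm_nonneg _).trans (hη 0 (left_mem_Icc.2 ht))
  have hvel : ∀ s ∈ Icc 0 t, ‖u (γ s) - (u (γ 0) + s • h)‖ ≤ η * t := by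
    intro s hs
    have hderiv : ∀ s ∈ Icc 0 t, HasDerivWithinAt (fun s => u (γ s) - s • h)
        (fderiv ℝ u (γ s) (u (γ s)) - h) (Icc 0 t) s := fun s hs => by
      simpa using (((hu _).hasFDerivAt.comp_hasDerivAt s (hγ s hs)).fun_sub
        ((hasDerivAt_id s).smul_const h)).hasDerivWithinAt
    have := norm_image_sub_le_of_norm_deriv_le_segment' hderiv
      (fun s hs => hη s (Ico_subset_Icc_self hs)) s hs
    rw [zero_smul, sub_zero, sub_zero] at this
    calc ‖u (γ s) - (u (γ 0) + s • h)‖ = ‖u (γ s) - s • h - u (γ 0)‖ := by congr 1; abel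
      _ ≤ η * s := this
      _ ≤ η * t := mul_le_mul_of_nonneg_left hs.2 hη0
  have hderiv : ∀ s ∈ Icc 0 t, HasDerivWithinAt
      (fun s => γ s - (γ 0 + s • u (γ 0) + (s ^ 2 / 2) • h))
      (u (γ s) - (u (γ 0) + s • h)) (Icc 0 t) s := fun s hs => by
    convert ((hγ s hs).fun_sub (((hasDerivAt_const s (γ 0)).fun_add ((hasDerivAt_id' s).smul_const
      (u (γ 0)))).fun_add (((hasDerivAt_pow 2 s).div_const 2).smul_const h))).hasDerivWithinAt
      using 1
    norm_num
  have := norm_image_sub_le_of_norm_deriv_le_segment' hderiv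
    (fun s hs => hvel s (Ico_subset_Icc_self hs)) t (right_mem_Icc.2 ht)
  simp only [zero_smul, add_zero, ne_eq, OfNat.ofNat_ne_zero, not_false_eq_true,
    zero_pow, zero_div, sub_self, sub_zero] at this
  linarith

lemma IsLocalFlow.isLittleO_taylor {u : E → E} {Φ : ℝ → E → E} (hu : ContDiff ℝ 1 u)
    (hΦ : IsLocalFlow u Φ) (x : E) :
    (fun q : E × ℝ => Φ q.2 q.1 - (q.1 + q.2 • u q.1 + (q.2 ^ 2 / 2) • fderiv ℝ u q.1 (u q.1)))
      =o[𝓝 x ×ˢ 𝓝[≥] 0] fun q => q.2 ^ 2 := by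
  obtain ⟨hΦ0, r, hr, hΦ⟩ := hΦ
  set h : E → E := fun z => fderiv ℝ u z (u z)
  have hh : Continuous h := (hu.continuous_fderiv one_ne_zero).clm_apply hu.continuous
  refine isLittleO_iff.2 fun η hη => ?_
  obtain ⟨R, hR, hball⟩ : ∃ R > 0, ∀ z ∈ Metric.ball x R,
      dist (u z) (u x) < 1 ∧ dist (h z) (h x) < η / 2 :=
    Metric.eventually_nhds_iff_ball.1 <| (hu.continuous.continuousAt.eventually
      (Metric.ball_mem_nhds _ one_pos)).and (hh.continuousAt.eventually
      (Metric.ball_mem_nhds _ (half_pos hη)))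
  set M := ‖u x‖ + 1
  have hM : 0 < M := by positivity
  filter_upwards [prod_mem_prod (Metric.ball_mem_nhds x (half_pos hR))
    (Ico_mem_nhdsGE (lt_min hr (div_pos (half_pos hR) hM)))] with ⟨y, t⟩ ⟨hy, ht⟩
  simp only at hy ht ⊢
  have hflow : ∀ s ∈ Icc 0 t, HasDerivAt (fun s => Φ s y) (u (Φ s y)) s := fun s hs =>
    hΦ y s (abs_lt.2 ⟨by linarith [hs.1], hs.2.trans_lt (ht.2.trans_le (min_le_left _ _))⟩)
  have hsub : Metric.ball y (R / 2) ⊆ Metric.ball x R :=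
    Metric.ball_subset_ball' (by linarith [Metric.mem_ball.1 hy])
  -- The flow moves at speed `< M` near `x`, so it stays within `R / 2` of `y` up to time `R / 2M`.
  have hnear : ∀ s ∈ Icc 0 t, Φ s y ∈ Metric.ball x R := by
    have hMt : M * t < R / 2 := by
      have := ht.2.trans_le (min_le_right _ _)
      rwa [lt_div_iff₀ hM, mul_comm] at this
    refine fun s hs => hsub (mem_ball_of_hasDerivAt_of_norm_lt hflow (hΦ0 y) (fun z hz => ?_)
      hM.le hMt hs)
    have := (hball z (hsub hz)).1
    rw [dist_eq_norm] at this
    linarith [norm_le_norm_add_norm_sub' (u z) (u x)]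
  rw [Real.norm_of_nonneg (sq_nonneg t)]
  refine norm_sub_taylor_le (hu.differentiable one_ne_zero) ht.1 hflow (hΦ0 y) fun s hs => ?_
  rw [← dist_eq_norm]
  linarith [dist_triangle_right (h (Φ s y)) (h y) (h x), (hball _ (hnear s hs)).2,
    (hball y (Metric.ball_subset_ball (half_le_self hR.le) hy)).2]

lemma IsLocalFlow.hasSecondOrderExpansion {u : E → E} {Φ : ℝ → E → E} (hu : ContDiff ℝ 1 u)
    (hΦ : IsLocalFlow u Φ) (x : E) :
    HasSecondOrderExpansion (fun ε => Φ ε x) x (u x) ((1 / 2 : ℝ) • fderiv ℝ u x (u x)) :=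
  ((hΦ.isLittleO_taylor hu x).comp_tendsto (tendsto_const_nhds.prodMk tendsto_id)).congr_left
    fun ε => by simp only [Function.comp_apply, id]; module

lemma IsLocalFlow.hasSecondOrderExpansion_comp {f g : E → E} {Φf Φg : ℝ → E → E}
    (hf : ContDiff ℝ 1 f) (hg : ContDiff ℝ 1 g) (hΦf : IsLocalFlow f Φf) (hΦg : IsLocalFlow g Φg)
    (x : E) :
    HasSecondOrderExpansion (fun ε => Φg ε (Φf ε x)) x (f x + g x)
      ((1 / 2 : ℝ) • fderiv ℝ f x (f x) + fderiv ℝ g x (f x) +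
        (1 / 2 : ℝ) • fderiv ℝ g x (g x)) := by
  have hy := hΦf.hasSecondOrderExpansion hf x
  set y := fun ε => Φf ε x
  set h : E → E := fun z => fderiv ℝ g z (g z)
  have hgy : HasDerivWithinAt (fun ε => g (y ε)) (fderiv ℝ g x (f x)) (Ici 0) 0 :=
    (hg.differentiable one_ne_zero x).hasFDerivAt.comp_hasDerivWithinAt_of_eq 0 hy.hasDerivWithinAt
      hy.apply_zero.symm
  have hhy : (fun ε => (1 / 2 : ℝ) • (h (y ε) - h x)) =o[𝓝[≥] 0] fun ε => ε ^ 0 := by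
    have hh : Continuous h := (hg.continuous_fderiv one_ne_zero).clm_apply hg.continuous
    simpa only [pow_zero, isLittleO_one_iff, sub_self, smul_zero, Function.comp_def] using
      (((hh.tendsto x).comp hy.tendsto).sub_const (h x)).const_smul (1 / 2 : ℝ)
  rw [hasDerivWithinAt_iff_isLittleO, hy.apply_zero] at hgy
  -- The error is the Taylor remainder of `Φg` at the moving point `y ε`, plus that of `Φf` at `x`,
  -- plus `ε` times the first-order remainder of `g ∘ y`, plus `ε² / 2` times `h (y ε) - h x`.
  refine ((((hΦg.isLittleO_taylor hg x).comp_tendsto (hy.tendsto.prodMk tendsto_id)).add hy).add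
    ((isLittleO_pow_smul 1 rfl (k := 1) (by simpa using hgy)).add
      (isLittleO_pow_smul 2 rfl hhy))).congr_left fun ε => ?_
  simp only [Function.comp_apply, id]
  module

lemma eventually_flow_comp_lt {v a : E → E} {L : E → ℝ} {φ : E →L[ℝ] ℝ} {x : E} {δ : ℝ}
    {Φ₁ Φ₂ Φ : ℝ → E → E} (hv : ContDiff ℝ 1 v) (ha : ContDiff ℝ 1 a)
    (hL : HasStrictFDerivAt L φ x) (hP : δ * φ (lieBracket ℝ v a x) < 0)
    (hΦ₁ : IsLocalFlow (fun z => v z - δ • a z) Φ₁) (hΦ₂ : IsLocalFlow (fun z => v z + δ • a z) Φ₂)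
    (hΦ : IsLocalFlow v Φ) :
    ∀ᶠ ε in 𝓝[>] 0, L (Φ₂ ε (Φ₁ ε x)) < L (Φ (2 * ε) x) := by
  have hvx := hv.differentiable one_ne_zero x
  have hax := ha.differentiable one_ne_zero x
  have hδax : DifferentiableAt ℝ (fun z => δ • a z) x := hax.const_smul δ
  have hbar := (hΦ.hasSecondOrderExpansion hv x).comp_mul zero_le_two
  rw [show (2 : ℝ) • v x = (v x - δ • a x) + (v x + δ • a x) by module] at hbar
  refine (hΦ₁.hasSecondOrderExpansion_comp (hv.sub (ha.const_smul δ)) (hv.add (ha.const_smul δ))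
    hΦ₂ x).eventually_lt hL hbar (Eq.trans_lt ?_ hP)
  rw [lieBracket, fderiv_fun_sub hvx hδax, fderiv_fun_add hvx hδax, fderiv_fun_const_smul hax]
  simp only [sub_apply, add_apply, smul_apply, map_sub, map_add, map_smul, smul_eq_mul]
  ring

theorem eventually_min_reordered_lt {v a : E → E} {L : E → ℝ} {φ : E →L[ℝ] ℝ} {x : E} {δ : ℝ}
    {Φ₁ Φ₂ Φ : ℝ → E → E} (hv : ContDiff ℝ 1 v) (ha : ContDiff ℝ 1 a)
    (hL : HasStrictFDerivAt L φ x) (hP : φ (lieBracket ℝ v a x) ≠ 0)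
    (hδ : 0 < δ) (hΦ₁ : IsLocalFlow (fun z => v z - δ • a z) Φ₁)
    (hΦ₂ : IsLocalFlow (fun z => v z + δ • a z) Φ₂) (hΦ : IsLocalFlow v Φ) :
    ∀ᶠ ε in 𝓝[>] 0, min (L (Φ₂ ε (Φ₁ ε x))) (L (Φ₁ ε (Φ₂ ε x))) < L (Φ (2 * ε) x) := by
  rcases hP.lt_or_gt with hneg | hpos
  · exact (eventually_flow_comp_lt hv ha hL (mul_neg_of_pos_of_neg hδ hneg) hΦ₁ hΦ₂ hΦ).mono
      fun ε hε => (min_le_left _ _).trans_lt hε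
  · have hΦ₁' : IsLocalFlow (fun z => v z + -δ • a z) Φ₁ := by simpa [neg_smul, ← sub_eq_add_neg]
    have hΦ₂' : IsLocalFlow (fun z => v z - -δ • a z) Φ₂ := by simpa [neg_smul]
    exact (eventually_flow_comp_lt hv ha hL (mul_neg_of_neg_of_pos (neg_neg_of_pos hδ) hpos)
      hΦ₂' hΦ₁' hΦ).mono fun ε hε => (min_le_right _ _).trans_lt hε

end Flow

section Gradient

variable {F : Type*} [NormedAddCommGroup F] [InnerProductSpace ℝ F] [CompleteSpace F]

lemma ContDiff.gradient_right {f : F → ℝ} {m n : WithTop ℕ∞} (hf : ContDiff ℝ n f)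
    (hmn : m + 1 ≤ n) : ContDiff ℝ m (∇ f) :=
  (InnerProductSpace.toDual ℝ F).symm.toContinuousLinearEquiv.toContinuousLinearMap.contDiff.comp
    (hf.fderiv_right hmn)

lemma gradient_fun_sum {ι : Type*} (s : Finset ι) {f : ι → F → ℝ} (c : ι → ℝ)
    (hf : ∀ i ∈ s, Differentiable ℝ (f i)) :
    ∇ (fun y => ∑ i ∈ s, c i * f i y) = fun y => ∑ i ∈ s, c i • ∇ (f i) y := by
  refine gradient_eq fun y => hasGradientAt_iff_hasFDerivAt.2 ?_
  simp only [map_sum, map_smulₛₗ, toDual_gradient, conj_trivial]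
  exact HasFDerivAt.fun_sum fun i hi => (hf i hi y).hasFDerivAt.const_mul (c i)

lemma gradient_fun_sub {f g : F → ℝ} (hf : Differentiable ℝ f) (hg : Differentiable ℝ g) :
    ∇ (fun y => f y - g y) = fun y => ∇ f y - ∇ g y := by
  refine gradient_eq fun y => hasGradientAt_iff_hasFDerivAt.2 ?_
  simp only [map_sub, toDual_gradient]
  exact (hf y).hasFDerivAt.sub (hg y).hasFDerivAt

end Gradient

theorem reordering_strictly_improves_of_commutator_ne_zero_general {n K : ℕ}
    (L : EuclideanSpace ℝ (Fin n) → ℝ)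
    (Lk : Fin K → EuclideanSpace ℝ (Fin n) → ℝ)
    (hL : ContDiff ℝ 1 L) (hLk : ∀ k, ContDiff ℝ 3 (Lk k))
    (w : Fin K → ℝ)
    (i j : Fin K) (hwi : 0 < w i) (hwj : 0 < w j)
    (x : EuclideanSpace ℝ (Fin n))
    (hP : ⟪fderiv ℝ (gradient (fun y => ∑ k, w k * Lk k y)) x
              (gradient (Lk i) x - gradient (Lk j) x)
            - fderiv ℝ (gradient (fun y => Lk i y - Lk j y)) x
              (∑ k, w k • gradient (Lk k) x),
            gradient L x⟫ ≠ 0)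
    (Φ₁ Φ₂ : ℝ → ℝ → EuclideanSpace ℝ (Fin n) → EuclideanSpace ℝ (Fin n))
    (Φbar : ℝ → EuclideanSpace ℝ (Fin n) → EuclideanSpace ℝ (Fin n))
    (hΦ₁0 : ∀ δ y, Φ₁ δ 0 y = y) (hΦ₂0 : ∀ δ y, Φ₂ δ 0 y = y)
    (hΦbar0 : ∀ y, Φbar 0 y = y)
    (hΦ₁ : ∀ δ : ℝ, ∃ r > (0 : ℝ), ∀ y, ∀ t : ℝ, |t| < r →
      HasDerivAt (fun s => Φ₁ δ s y)
        (-(∑ k, w k • gradient (Lk k) (Φ₁ δ t y))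
          - δ • (gradient (Lk i) (Φ₁ δ t y) - gradient (Lk j) (Φ₁ δ t y))) t)
    (hΦ₂ : ∀ δ : ℝ, ∃ r > (0 : ℝ), ∀ y, ∀ t : ℝ, |t| < r →
      HasDerivAt (fun s => Φ₂ δ s y)
        (-(∑ k, w k • gradient (Lk k) (Φ₂ δ t y))
          + δ • (gradient (Lk i) (Φ₂ δ t y) - gradient (Lk j) (Φ₂ δ t y))) t)
    (hΦbar : ∃ r > (0 : ℝ), ∀ y, ∀ t : ℝ, |t| < r →
      HasDerivAt (fun s => Φbar s y)
        (-(∑ k, w k • gradient (Lk k) (Φbar t y))) t) :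
    ∃ δ : ℝ, 0 < δ ∧ δ ≤ min (w i) (w j) ∧
      ∃ ε₀ > (0 : ℝ), ∀ ε : ℝ, 0 < ε → ε < ε₀ →
        min (L (Φ₂ δ ε (Φ₁ δ ε x))) (L (Φ₁ δ ε (Φ₂ δ ε x))) < L (Φbar (2 * ε) x) := by
  have hδ : 0 < min (w i) (w j) := lt_min hwi hwj
  have hdiff : ∀ k, Differentiable ℝ (Lk k) := fun k => (hLk k).differentiable (by norm_num)
  have hgrad : ∀ k, ContDiff ℝ 1 (∇ (Lk k)) := fun k => (hLk k).gradient_right (by norm_num)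
  have hW : ContDiff ℝ 1 fun z => ∑ k, w k • ∇ (Lk k) z :=
    ContDiff.sum fun k _ => (hgrad k).const_smul (w k)
  rw [gradient_fun_sum _ _ fun k _ => hdiff k, gradient_fun_sub (hdiff i) (hdiff j)] at hP
  have hP' : fderiv ℝ L x (lieBracket ℝ (fun z => -∑ k, w k • ∇ (Lk k) z)
      (fun z => ∇ (Lk i) z - ∇ (Lk j) z) x) ≠ 0 := by
    rw [lieBracket, fderiv_fun_neg, ← inner_gradient_left, real_inner_comm]
    convert hP using 2
    simp only [map_neg, neg_apply]
    abel
  obtain ⟨ε₀, hε₀, hsub⟩ := mem_nhdsGT_iff_exists_Ioo_subset.1 <|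
    eventually_min_reordered_lt hW.neg ((hgrad i).sub (hgrad j))
      (hL.contDiffAt.hasStrictFDerivAt one_ne_zero) hP' hδ ⟨hΦ₁0 _, hΦ₁ _⟩ ⟨hΦ₂0 _, hΦ₂ _⟩
      ⟨hΦbar0, hΦbar⟩
  exact ⟨_, hδ, le_rfl, ε₀, hε₀, fun ε h₀ h₁ => hsub ⟨h₀, h₁⟩⟩

/-- Local optimality criterion: if `P(L_i − L_j, Σ_k w_k L_k; L)(x) ≠ 0` and both
weights `w_i, w_j` are positive, then there are `δ > 0` with `δ ≤ min(w_i, w_j)`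
and `ε₀ > 0` such that for all `ε ∈ (0, ε₀)` one of the two reordered
trajectories (perturbing the weights of domains `i, j` by `±δ` on the two halves
of the time interval) strictly improves the loss `L` over the constant-weight
trajectory. Here `Φ₁ δ`, `Φ₂ δ` are the flows of
`u₁ = −Σ_k w_k ∇L_k − δ(∇L_i − ∇L_j)` and `u₂ = −Σ_k w_k ∇L_k + δ(∇L_i − ∇L_j)`,
and `Φbar` is the flow of `v = −Σ_k w_k ∇L_k`. -/
theorem reordering_strictly_improves_of_commutator_ne_zero {n K : ℕ}
    (L : EuclideanSpace ℝ (Fin n) → ℝ)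
    (Lk : Fin K → EuclideanSpace ℝ (Fin n) → ℝ)
    (hL : ContDiff ℝ 1 L) (hLk : ∀ k, ContDiff ℝ 3 (Lk k))
    (w : Fin K → ℝ) (hw1 : ∑ k, w k = 1)
    (i j : Fin K) (hij : i ≠ j) (hwi : 0 < w i) (hwj : 0 < w j)
    (x : EuclideanSpace ℝ (Fin n))
    (hP : ⟪fderiv ℝ (gradient (fun y => ∑ k, w k * Lk k y)) x
              (gradient (Lk i) x - gradient (Lk j) x)
            - fderiv ℝ (gradient (fun y => Lk i y - Lk j y)) x
              (∑ k, w k • gradient (Lk k) x),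
            gradient L x⟫ ≠ 0)
    (Φ₁ Φ₂ : ℝ → ℝ → EuclideanSpace ℝ (Fin n) → EuclideanSpace ℝ (Fin n))
    (Φbar : ℝ → EuclideanSpace ℝ (Fin n) → EuclideanSpace ℝ (Fin n))
    (hΦ₁0 : ∀ δ y, Φ₁ δ 0 y = y) (hΦ₂0 : ∀ δ y, Φ₂ δ 0 y = y)
    (hΦbar0 : ∀ y, Φbar 0 y = y)
    (hΦ₁ : ∀ δ : ℝ, ∃ r > (0 : ℝ), ∀ y, ∀ t : ℝ, |t| < r →
      HasDerivAt (fun s => Φ₁ δ s y)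
        (-(∑ k, w k • gradient (Lk k) (Φ₁ δ t y))
          - δ • (gradient (Lk i) (Φ₁ δ t y) - gradient (Lk j) (Φ₁ δ t y))) t)
    (hΦ₂ : ∀ δ : ℝ, ∃ r > (0 : ℝ), ∀ y, ∀ t : ℝ, |t| < r →
      HasDerivAt (fun s => Φ₂ δ s y)
        (-(∑ k, w k • gradient (Lk k) (Φ₂ δ t y))
          + δ • (gradient (Lk i) (Φ₂ δ t y) - gradient (Lk j) (Φ₂ δ t y))) t)
    (hΦbar : ∃ r > (0 : ℝ), ∀ y, ∀ t : ℝ, |t| < r →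
      HasDerivAt (fun s => Φbar s y)
        (-(∑ k, w k • gradient (Lk k) (Φbar t y))) t) :
    ∃ δ : ℝ, 0 < δ ∧ δ ≤ min (w i) (w j) ∧
      ∃ ε₀ > (0 : ℝ), ∀ ε : ℝ, 0 < ε → ε < ε₀ →
        min (L (Φ₂ δ ε (Φ₁ δ ε x))) (L (Φ₁ δ ε (Φ₂ δ ε x))) < L (Φbar (2 * ε) x) :=
  reordering_strictly_improves_of_commutator_ne_zero_general L Lk hL hLk w i j hwi hwj x hP Φ₁ Φ₂
    Φbar hΦ₁0 hΦ₂0 hΦbar0 hΦ₁ hΦ₂ hΦbar
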